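/- Let m, n ≥ 1, let D_0, D_1, D_2 be m × m complex matrices, let p, q be homogeneous polynomials of degree n in ℂ[x_0,x_1,x_2], and let (β^0, β^1, β^2) be a Bezout decomposition of (p,q), with associated blown Bezout matrix B(p,q) = β^0 ⊗ D_0 + β^1 ⊗ D_1 + β^2 ⊗ D_2. Let x, y ∈ ℂ³ and e, h ∈ ℂ^m satisfy (x_0 D_0 + x_1 D_1 + x_2 D_2)^T e = 0 and (y_0 D_0 + y_1 D_1 + y_2 D_2) h = 0. Then (x_1 y_2 − x_2 y_1) · V_n(x,e)^T B(p,q) V_n(y,h) = ( p(x)q(y) − q(x)p(y) ) · (e^T D_0 h), where V_n(x,e)^T B(p,q) V_n(y,h) = Σ_{|i| = |j| = n−1} x^i y^j ( β^0_{ij} e^T D_0 h + β^1_{ij} e^T D_1 h + β^2_{ij} e^T D_2 h ). -/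

import Mathlib

open Matrix

/-- Multi-indices `α ∈ ℕ³` (as triples) of total degree `k`. -/
abbrev TriIdx (k : ℕ) : Type := {α : ℕ × ℕ × ℕ // α.1 + α.2.1 + α.2.2 = k}

noncomputable instance (k : ℕ) : Fintype (TriIdx k) :=
  Fintype.ofInjective
    (fun α : TriIdx k =>
      ((⟨α.1.1, by have := α.2; omega⟩ : Fin (k + 1)),
       (⟨α.1.2.1, by have := α.2; omega⟩ : Fin (k + 1)),
       (⟨α.1.2.2, by have := α.2; omega⟩ : Fin (k + 1))))
    (by
      rintro ⟨⟨a1, a2, a3⟩, ha⟩ ⟨⟨b1, b2, b3⟩, hb⟩ hEq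
      simp only [Prod.mk.injEq, Fin.mk.injEq] at hEq
      exact Subtype.ext (by simp [hEq.1, hEq.2.1, hEq.2.2]))

/-- A Bezout decomposition of a pair `(p,q)` of homogeneous polynomials of degree `n` in
`ℂ[x₀,x₁,x₂]`: a triple of symmetric matrices `β⁰, β¹, β²` indexed by `{α : |α| = n−1}`
with `p(x)q(y) − q(x)p(y) = Σ_{ij} x^i y^j (β⁰_{ij}(x₁y₂−x₂y₁) + β¹_{ij}(x₂y₀−x₀y₂) +
β²_{ij}(x₀y₁−x₁y₀))`. -/
def IsBezoutDecomp (n : ℕ) (p q : MvPolynomial (Fin 3) ℂ)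
    (β0 β1 β2 : TriIdx (n - 1) → TriIdx (n - 1) → ℂ) : Prop :=
  (∀ i j, β0 i j = β0 j i) ∧ (∀ i j, β1 i j = β1 j i) ∧ (∀ i j, β2 i j = β2 j i) ∧
  ∀ x₀ x₁ x₂ y₀ y₁ y₂ : ℂ,
    MvPolynomial.eval ![x₀, x₁, x₂] p * MvPolynomial.eval ![y₀, y₁, y₂] q -
        MvPolynomial.eval ![x₀, x₁, x₂] q * MvPolynomial.eval ![y₀, y₁, y₂] p =
      ∑ i : TriIdx (n - 1), ∑ j : TriIdx (n - 1),
        (x₀ ^ i.1.1 * x₁ ^ i.1.2.1 * x₂ ^ i.1.2.2) *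
          (y₀ ^ j.1.1 * y₁ ^ j.1.2.1 * y₂ ^ j.1.2.2) *
          (β0 i j * (x₁ * y₂ - x₂ * y₁) + β1 i j * (x₂ * y₀ - x₀ * y₂) +
            β2 i j * (x₀ * y₁ - x₁ * y₀))

/-- Let `B(p,q) = β⁰⊗D₀ + β¹⊗D₁ + β²⊗D₂` be the blown Bezout matrix of
a Bezout decomposition of `(p,q)`.  If `e` is in the left kernel of the pencil at `x`
and `h` in the right kernel at `y`, then
`(x₁y₂−x₂y₁) · V_n(x,e)ᵀ B(p,q) V_n(y,h) = (p(x)q(y) − q(x)p(y)) · (eᵀD₀h)`,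
where `V_n(x,e)ᵀ B(p,q) V_n(y,h) = Σ_{ij} x^i y^j (β⁰_{ij} eᵀD₀h + β¹_{ij} eᵀD₁h +
β²_{ij} eᵀD₂h)`. -/
theorem vandermonde_blown_bezout_pairing
    (m n : ℕ) (hm : 1 ≤ m) (hn : 1 ≤ n)
    (D₀ D₁ D₂ : Matrix (Fin m) (Fin m) ℂ)
    (p q : MvPolynomial (Fin 3) ℂ) (hp : p.IsHomogeneous n) (hq : q.IsHomogeneous n)
    (β0 β1 β2 : TriIdx (n - 1) → TriIdx (n - 1) → ℂ)
    (hβ : IsBezoutDecomp n p q β0 β1 β2)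
    (x₀ x₁ x₂ y₀ y₁ y₂ : ℂ) (e h : Fin m → ℂ)
    (he : (x₀ • D₀ + x₁ • D₁ + x₂ • D₂)ᵀ.mulVec e = 0)
    (hh : (y₀ • D₀ + y₁ • D₁ + y₂ • D₂).mulVec h = 0) :
    (x₁ * y₂ - x₂ * y₁) *
        (∑ i : TriIdx (n - 1), ∑ j : TriIdx (n - 1),
          (x₀ ^ i.1.1 * x₁ ^ i.1.2.1 * x₂ ^ i.1.2.2) *
            (y₀ ^ j.1.1 * y₁ ^ j.1.2.1 * y₂ ^ j.1.2.2) *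
            (β0 i j * (e ⬝ᵥ D₀.mulVec h) + β1 i j * (e ⬝ᵥ D₁.mulVec h) +
              β2 i j * (e ⬝ᵥ D₂.mulVec h))) =
      (MvPolynomial.eval ![x₀, x₁, x₂] p * MvPolynomial.eval ![y₀, y₁, y₂] q -
          MvPolynomial.eval ![x₀, x₁, x₂] q * MvPolynomial.eval ![y₀, y₁, y₂] p) *
        (e ⬝ᵥ D₀.mulVec h) := by
  obtain ⟨-, -, -, heq⟩ := hβ
  set A0 := e ⬝ᵥ D₀.mulVec h with hA0
  set A1 := e ⬝ᵥ D₁.mulVec h with hA1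
  set A2 := e ⬝ᵥ D₂.mulVec h with hA2
  have hx : x₀ * A0 + x₁ * A1 + x₂ * A2 = 0 := by
    have h1 : e ⬝ᵥ ((x₀ • D₀ + x₁ • D₁ + x₂ • D₂).mulVec h) = x₀ * A0 + x₁ * A1 + x₂ * A2 := by
      simp [Matrix.add_mulVec, Matrix.smul_mulVec, dotProduct_add, dotProduct_smul,
        smul_eq_mul]
      rfl
    rw [← h1, Matrix.dotProduct_mulVec, ← Matrix.mulVec_transpose, he, zero_dotProduct]
  have hy : y₀ * A0 + y₁ * A1 + y₂ * A2 = 0 := by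
    have h1 : e ⬝ᵥ ((y₀ • D₀ + y₁ • D₁ + y₂ • D₂).mulVec h) = y₀ * A0 + y₁ * A1 + y₂ * A2 := by
      simp [Matrix.add_mulVec, Matrix.smul_mulVec, dotProduct_add, dotProduct_smul,
        smul_eq_mul]
      rfl
    rw [← h1, hh, dotProduct_zero]
  rw [heq x₀ x₁ x₂ y₀ y₁ y₂, Finset.mul_sum, Finset.sum_mul]
  refine Finset.sum_congr rfl fun i _ => ?_
  rw [Finset.mul_sum, Finset.sum_mul]
  refine Finset.sum_congr rfl fun j _ => ?_
  linear_combination ((x₀ ^ i.1.1 * x₁ ^ i.1.2.1 * x₂ ^ i.1.2.2) *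
      (y₀ ^ j.1.1 * y₁ ^ j.1.2.1 * y₂ ^ j.1.2.2)) *
      (β1 i j * (y₂ * hx - x₂ * hy) + β2 i j * (x₁ * hy - y₁ * hx))
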